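/- Let {F_i}_{i∈I} be a factorization inverse system over a field F and let Z be a scheme over F. Suppose given, for every i ∈ I, a point Q_i ∈ Z(F_i) such that whenever i ≻ j (i.e. F_i ⊆ F_j), the image of Q_i under the natural map Z(F_i) → Z(F_j) equals Q_j. Then there exists a unique F-point Q ∈ Z(F) whose image in Z(F_i) is Q_i for every i ∈ I. -/

import Mathlib

universe u

/-- A *factorization inverse system* over a field `F`: a finite inverse system of fields
indexed by `I = Iv ⊔ Ie`, where each index `k ∈ Ie` is dominated by exactly the two
distinct indices `l k, r k ∈ Iv` (with fixed left/right labels) and there are no other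
relations, and whose inverse limit (in the category of rings) is `F`.  -/
structure FactorizationInverseSystem (F : Type u) [Field F] : Type (u + 1) where
  /-- vertex indices -/
  Iv : Type
  /-- edge indices -/
  Ie : Type
  [finIv : Finite Iv]
  [finIe : Finite Ie]
  /-- the fields at the vertex indices -/
  Fv : Iv → Type u
  /-- the fields at the edge indices -/
  Fe : Ie → Type u
  [fieldFv : ∀ i, Field (Fv i)]
  [fieldFe : ∀ k, Field (Fe k)]
  /-- the left vertex of an edge -/
  l : Ie → Iv
  /-- the right vertex of an edge -/
  r : Ie → Iv
  lr_ne : ∀ k, l k ≠ r k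
  /-- the inclusion of the left vertex field into an edge field -/
  φl : ∀ k, Fv (l k) →+* Fe k
  /-- the inclusion of the right vertex field into an edge field -/
  φr : ∀ k, Fv (r k) →+* Fe k
  /-- the projections from the inverse limit `F` to the fields of the system -/
  ι : ∀ i, F →+* Fv i
  compat : ∀ k, (φl k).comp (ι (l k)) = (φr k).comp (ι (r k))
  /-- `F` is the inverse limit of the system: every compatible family comes from a
  unique element of `F`. -/
  limit : ∀ x : ∀ i, Fv i, (∀ k, φl k (x (l k)) = φr k (x (r k))) →
    ∃! a : F, ∀ i, ι i a = x i

attribute [instance] FactorizationInverseSystem.finIv FactorizationInverseSystem.finIe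
attribute [instance] FactorizationInverseSystem.fieldFv FactorizationInverseSystem.fieldFe

/-!
STATEMENT 2: Let {F_i}_{i∈I} be a factorization inverse system over a field F and let Z
be a scheme over F.  Suppose given, for every i ∈ I, a point Q_i ∈ Z(F_i) such that
whenever F_i ⊆ F_j, the image of Q_i under Z(F_i) → Z(F_j) equals Q_j.  Then there exists
a unique F-point Q ∈ Z(F) whose image in Z(F_i) is Q_i for every i ∈ I.

An E-point of the F-scheme (Z, z : Z ⟶ Spec F) is a morphism Spec E ⟶ Z over Spec F; the
only inclusions in the system are F_{l k}, F_{r k} ⊆ F_k (for k ∈ Ie) and the structural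
inclusions of F.
-/

/- An `E`-point of `Z` is a point `x ∈ Z` together with a map `κ(x) → E`. The points `Q_i`
all lie over one `x ∈ Z`, since the graph `(I_v, I_e)` is connected (otherwise `F` would have a
nontrivial idempotent), and their residue maps `κ(x) → F_i` agree in the edge fields, so the
limit property of `F` glues them to `κ(x) → F`. As joint injectivity of the maps `F → F_i`,
the same property gives uniqueness and shows that the glued point lies over `Spec F`. -/

open AlgebraicGeometry CategoryTheory
open IsLocalRing

namespace AlgebraicGeometry.Scheme

variable {X : Scheme.{u}}

lemma SpecMap_comp_apply_closedPoint {K L : Type u} [Field K] [Field L] (φ : K →+* L)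
    (f : Spec (.of K) ⟶ X) : (Spec.map (CommRingCat.ofHom φ) ≫ f) (closedPoint L) =
      f (closedPoint K) :=
  congrArg f (Subsingleton.elim _ _)

lemma exists_SpecMap_comp_fromSpecResidueField {K : Type u} [Field K] (f : Spec (.of K) ⟶ X)
    {x : X} (hx : f (closedPoint K) = x) :
    ∃ g : X.residueField x ⟶ .of K, Spec.map g ≫ X.fromSpecResidueField x = f := by
  subst hx
  exact ⟨_, descResidueField_stalkClosedPointTo_fromSpecResidueField K X f⟩

lemma SpecMap_comp_fromSpecResidueField_inj {K : CommRingCat.{u}} {x : X}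
    {g g' : X.residueField x ⟶ K} :
    Spec.map g ≫ X.fromSpecResidueField x = Spec.map g' ≫ X.fromSpecResidueField x ↔ g = g' :=
  ⟨fun h => Spec.map_injective ((cancel_mono _).mp h), fun h => h ▸ rfl⟩

end AlgebraicGeometry.Scheme

namespace FactorizationInverseSystem

variable {F : Type u} [Field F] (S : FactorizationInverseSystem F)

def compatibleFamilies : Subring (∀ i, S.Fv i) :=
  RingHom.eqLocus (RingHom.pi fun k => (S.φl k).comp (Pi.evalRingHom _ (S.l k)))
    (RingHom.pi fun k => (S.φr k).comp (Pi.evalRingHom _ (S.r k)))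

lemma mem_compatibleFamilies {x : ∀ i, S.Fv i} :
    x ∈ S.compatibleFamilies ↔ ∀ k, S.φl k (x (S.l k)) = S.φr k (x (S.r k)) :=
  funext_iff

noncomputable def limitEquiv : F ≃+* S.compatibleFamilies :=
  RingEquiv.ofBijective
    ((RingHom.pi S.ι).codRestrict _ fun a =>
      S.mem_compatibleFamilies.2 fun k => RingHom.congr_fun (S.compat k) a)
    ⟨fun _ b h => (S.limit _ fun k => RingHom.congr_fun (S.compat k) b).unique
        (fun i => congr_fun (congrArg Subtype.val h) i) fun _ => rfl,
      fun x => (S.limit x (S.mem_compatibleFamilies.1 x.2)).exists.imp fun _ ha =>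
        Subtype.ext (funext ha)⟩

lemma ι_injective {a b : F} (h : ∀ i, S.ι i a = S.ι i b) : a = b :=
  S.limitEquiv.injective (Subtype.ext (funext h))

lemma ringHom_ext {R : Type*} [NonAssocSemiring R] {f f' : R →+* F}
    (h : ∀ i, (S.ι i).comp f = (S.ι i).comp f') : f = f' :=
  RingHom.ext fun t => S.ι_injective fun i => RingHom.congr_fun (h i) t

section lift

variable {R : Type*} [NonAssocSemiring R] (g : ∀ i, R →+* S.Fv i)
  (hg : ∀ k, (S.φl k).comp (g (S.l k)) = (S.φr k).comp (g (S.r k)))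

noncomputable def lift : R →+* F :=
  S.limitEquiv.symm.toRingHom.comp <| (RingHom.pi g).codRestrict _ fun t =>
    S.mem_compatibleFamilies.2 fun k => RingHom.congr_fun (hg k) t

@[simp]
lemma ι_comp_lift (i : S.Iv) : (S.ι i).comp (S.lift g hg) = g i := by
  ext t
  exact congr_fun (congrArg Subtype.val (S.limitEquiv.apply_symm_apply _)) i

end lift

lemma nonempty_Iv : Nonempty S.Iv := by
  by_contra h
  exact zero_ne_one (S.ι_injective fun i => (h ⟨i⟩).elim)

/-- Connectedness of the graph `(Iv, Ie)`: the indicator of a union of components would be a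
nontrivial idempotent of the field `F`. -/
lemma eq_of_forall_edge {α : Type*} (f : S.Iv → α) (hf : ∀ k, f (S.l k) = f (S.r k))
    (i j : S.Iv) : f i = f j := by
  classical
  obtain ⟨e, he, -⟩ := S.limit (fun m => if f m = f i then 1 else 0) fun k => by
    simp only [hf k]
    split_ifs <;> simp
  have hidem : IsIdempotentElem e := S.ι_injective fun m => by
    rw [map_mul, he]
    split_ifs <;> simp
  by_contra hji
  rcases IsIdempotentElem.iff_eq_zero_or_one.1 hidem with rfl | rfl
  · simpa using he i
  · simpa [Ne.symm hji] using he j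

variable {X : Scheme.{u}}

lemma Spec_hom_ext {f f' : Spec (.of F) ⟶ X}
    (h : ∀ i, Spec.map (CommRingCat.ofHom (S.ι i)) ≫ f =
      Spec.map (CommRingCat.ofHom (S.ι i)) ≫ f') : f = f' := by
  obtain ⟨i⟩ := S.nonempty_Iv
  have hx : f' (closedPoint F) = f (closedPoint F) := by
    rw [← Scheme.SpecMap_comp_apply_closedPoint (S.ι i), ← h i,
      Scheme.SpecMap_comp_apply_closedPoint]
  generalize hfx : f (closedPoint F) = x at hx
  obtain ⟨g, rfl⟩ := Scheme.exists_SpecMap_comp_fromSpecResidueField f hfx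
  obtain ⟨g', rfl⟩ := Scheme.exists_SpecMap_comp_fromSpecResidueField f' hx
  simp only [← Spec.map_comp_assoc, Scheme.SpecMap_comp_fromSpecResidueField_inj] at h ⊢
  exact CommRingCat.hom_ext (S.ringHom_ext fun i => congrArg CommRingCat.Hom.hom (h i))

lemma exists_SpecMap_ι_comp_eq (Q : ∀ i, Spec (.of (S.Fv i)) ⟶ X)
    (hQ : ∀ k, Spec.map (CommRingCat.ofHom (S.φl k)) ≫ Q (S.l k) =
      Spec.map (CommRingCat.ofHom (S.φr k)) ≫ Q (S.r k)) :
    ∃ P : Spec (.of F) ⟶ X, ∀ i, Spec.map (CommRingCat.ofHom (S.ι i)) ≫ P = Q i := by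
  obtain ⟨i₀⟩ := S.nonempty_Iv
  obtain ⟨x, hx⟩ : ∃ x : X, ∀ i, Q i (closedPoint _) = x := ⟨_, fun i =>
    S.eq_of_forall_edge (fun i => Q i (closedPoint _)) (fun k => by
      simpa only [Scheme.SpecMap_comp_apply_closedPoint] using
        congrArg (fun f => f (closedPoint (S.Fe k))) (hQ k)) i i₀⟩
  choose g hg using fun i => Scheme.exists_SpecMap_comp_fromSpecResidueField (Q i) (hx i)
  have hgl (k : S.Ie) : (S.φl k).comp (g (S.l k)).hom = (S.φr k).comp (g (S.r k)).hom := by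
    have := hQ k
    rw [← hg, ← hg, ← Spec.map_comp_assoc, ← Spec.map_comp_assoc,
      Scheme.SpecMap_comp_fromSpecResidueField_inj] at this
    exact congrArg CommRingCat.Hom.hom this
  refine ⟨Spec.map (CommRingCat.ofHom (S.lift (fun i => (g i).hom) hgl)) ≫
    X.fromSpecResidueField x, fun i => ?_⟩
  rw [← Spec.map_comp_assoc, ← CommRingCat.ofHom_comp, S.ι_comp_lift, CommRingCat.ofHom_hom,
    hg]

end FactorizationInverseSystem

theorem stmt_2_general {F : Type u} [Field F] (S : FactorizationInverseSystem F)
    (Z : Scheme.{u}) (z : Z ⟶ Spec (CommRingCat.of F))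
    -- the points Q_i ∈ Z(F_i), for i ∈ I = Iv ⊔ Ie:
    (Qv : ∀ i : S.Iv, Spec (CommRingCat.of (S.Fv i)) ⟶ Z)
    (Qe : ∀ k : S.Ie, Spec (CommRingCat.of (S.Fe k)) ⟶ Z)
    (hQv : ∀ i, Qv i ≫ z = Spec.map (CommRingCat.ofHom (S.ι i)))
    -- compatibility: for i ≻ k the image of Q_i in Z(F_k) is Q_k
    (hl : ∀ k, Spec.map (CommRingCat.ofHom (S.φl k)) ≫ Qv (S.l k) = Qe k)
    (hr : ∀ k, Spec.map (CommRingCat.ofHom (S.φr k)) ≫ Qv (S.r k) = Qe k) :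
    -- there is a unique F-point of Z inducing all the Q_i
    ∃! Q : Spec (CommRingCat.of F) ⟶ Z,
      Q ≫ z = 𝟙 (Spec (CommRingCat.of F)) ∧
      (∀ i, Spec.map (CommRingCat.ofHom (S.ι i)) ≫ Q = Qv i) ∧
      (∀ k, Spec.map (CommRingCat.ofHom ((S.φl k).comp (S.ι (S.l k)))) ≫ Q = Qe k) := by
  obtain ⟨Q, hQ⟩ := S.exists_SpecMap_ι_comp_eq Qv fun k => (hl k).trans (hr k).symm
  refine ⟨Q, ⟨?_, hQ, fun k => ?_⟩, fun Q' ⟨_, hQ', _⟩ =>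
    S.Spec_hom_ext fun i => (hQ' i).trans (hQ i).symm⟩
  · exact S.Spec_hom_ext fun i => by rw [reassoc_of% (hQ i), hQv, Category.comp_id]
  · rw [CommRingCat.ofHom_comp, Spec.map_comp, Category.assoc, hQ, hl]

theorem stmt_2 {F : Type u} [Field F] (S : FactorizationInverseSystem F)
    (Z : Scheme.{u}) (z : Z ⟶ Spec (CommRingCat.of F))
    -- the points Q_i ∈ Z(F_i), for i ∈ I = Iv ⊔ Ie:
    (Qv : ∀ i : S.Iv, Spec (CommRingCat.of (S.Fv i)) ⟶ Z)
    (Qe : ∀ k : S.Ie, Spec (CommRingCat.of (S.Fe k)) ⟶ Z)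
    (hQv : ∀ i, Qv i ≫ z = Spec.map (CommRingCat.ofHom (S.ι i)))
    (hQe : ∀ k, Qe k ≫ z = Spec.map (CommRingCat.ofHom ((S.φl k).comp (S.ι (S.l k)))))
    -- compatibility: for i ≻ k the image of Q_i in Z(F_k) is Q_k
    (hl : ∀ k, Spec.map (CommRingCat.ofHom (S.φl k)) ≫ Qv (S.l k) = Qe k)
    (hr : ∀ k, Spec.map (CommRingCat.ofHom (S.φr k)) ≫ Qv (S.r k) = Qe k) :
    -- there is a unique F-point of Z inducing all the Q_i
    ∃! Q : Spec (CommRingCat.of F) ⟶ Z,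
      Q ≫ z = 𝟙 (Spec (CommRingCat.of F)) ∧
      (∀ i, Spec.map (CommRingCat.ofHom (S.ι i)) ≫ Q = Qv i) ∧
      (∀ k, Spec.map (CommRingCat.ofHom ((S.φl k).comp (S.ι (S.l k)))) ≫ Q = Qe k) :=
  stmt_2_general S Z z Qv Qe hQv hl hr
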